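/- arXiv:2604.20045 — 3 statements merged into one kernel-verified Lean document; each statement's English description precedes it below -/
import Mathlib

section
/- Suppose Ψ : ℝ × 𝒱 → ℝ is measurable and there exist constants B, K with |Ψ(t,v)| ≤ B and |Ψ(t,v) − Ψ(0,v)| ≤ K·|t| for all (t,v); suppose D : 𝒪 → ℝ is bounded measurable with E_{P₀}[D | 𝒢] = 0 P₀-almost surely; and suppose there is a measurable φ : 𝒱 → ℝ such that φ∘V is a version of the conditional expectation E_{P₀}[ D·(s − E_{P₀}[s | 𝒢]) | 𝒢 ] and, for (P₀∘V⁻¹)-almost every v, the map t ↦ Ψ(t,v) is differentiable at t = 0 with derivative φ(v). Define Ω(t) := ∫ Ψ(t, V(o)) · ( h(V(o)) − ∫ h(V) dP_t ) dP_t(o). Then t ↦ Ω(t) is differentiable at t = 0 and Ω′(0) = ∫ D*(o)·s(o) dP₀(o), where D*(o) := ( D(o) − ∫ Ψ(0, V) dP₀ + Ψ(0, V(o)) ) · ( h(V(o)) − ∫ h(V) dP₀ ) − Ω(0). -/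
/-!
For small `t` the density `1 + t s` is nonnegative, so `∫ h(V) dP_t = ∫ h(V) dP₀ + t c` with
`c = ∫ h(V) s dP₀`, and `Ω t` is the `P₀`-integral of `Ψ(t, V) · (Z − t c)(1 + t s)`, where
`Z = h(V) − ∫ h(V) dP₀`. This integrand is Lipschitz in `t` at `0` with a uniform constant, so
differentiating under the integral gives `Ω'(0) = ∫ φ(V) Z + Ψ(0, V) (Z s − c) dP₀`.
Since `Z` is `𝒢`-measurable, `∫ φ(V) Z = ∫ Z · E[D (s − E[s|𝒢]) | 𝒢] = ∫ Z D s`: the term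
`Z E[s|𝒢] D` integrates to `∫ Z E[s|𝒢] E[D|𝒢] = 0`. The remaining terms of `∫ D* s` match
because `∫ s = 0`.
-/

open MeasureTheory Metric Filter Topology
open scoped ENNReal

/-- Unlike `hasDerivAt_integral_of_dominated_loc_of_lip`, only a Lipschitz bound at `x₀` is
assumed. -/
theorem hasDerivAt_integral_of_dominated_loc_of_lip' {α 𝕜 E : Type*} [MeasurableSpace α]
    [RCLike 𝕜] [NormedAddCommGroup E] [NormedSpace ℝ E] [NormedSpace 𝕜 E]
    {μ : Measure α} {F : 𝕜 → α → E} {F' : α → E} {x₀ : 𝕜} {s : Set 𝕜} {bound : α → ℝ}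
    (hs : s ∈ 𝓝 x₀) (hF_meas : ∀ x ∈ s, AEStronglyMeasurable (F x) μ)
    (hF_int : Integrable (F x₀) μ) (hF'_meas : AEStronglyMeasurable F' μ)
    (h_lipsch : ∀ᵐ a ∂μ, ∀ x ∈ s, ‖F x a - F x₀ a‖ ≤ bound a * ‖x - x₀‖)
    (bound_integrable : Integrable bound μ)
    (h_diff : ∀ᵐ a ∂μ, HasDerivAt (F · a) (F' a) x₀) :
    Integrable F' μ ∧ HasDerivAt (fun x ↦ ∫ a, F x a ∂μ) (∫ a, F' a ∂μ) x₀ := by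
  set L : E →L[𝕜] 𝕜 →L[𝕜] E := ContinuousLinearMap.smulRightL 𝕜 𝕜 E 1
  have hm : AEStronglyMeasurable (L ∘ F') μ := L.continuous.comp_aestronglyMeasurable hF'_meas
  obtain ⟨hF'_int, key⟩ := hasFDerivAt_integral_of_dominated_loc_of_lip' hs hF_meas hF_int hm
    h_lipsch bound_integrable (h_diff.mono fun _ ha ↦ ha.hasFDerivAt)
  replace hF'_int : Integrable F' μ := by
    rw [← integrable_norm_iff hm] at hF'_int
    simpa [L, (· ∘ ·), integrable_norm_iff hF'_meas] using! hF'_int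
  refine ⟨hF'_int, ?_⟩
  by_cases hE : CompleteSpace E; swap
  · simpa [integral, hE] using! hasDerivAt_const x₀ 0
  simp_rw [hasDerivAt_iff_hasFDerivAt]
  simpa only [(· ∘ ·), ContinuousLinearMap.integral_comp_comm _ hF'_int] using! key

theorem abs_mul_sub_mul_le {a b a₀ b₀ Ka Kb Ba Bb r : ℝ} (ha : |a - a₀| ≤ Ka * r)
    (hb : |b - b₀| ≤ Kb * r) (ha₀ : |a₀| ≤ Ba) (hb_bdd : |b| ≤ Bb) :
    |a * b - a₀ * b₀| ≤ (Ka * Bb + Ba * Kb) * r := by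
  have h₁ : |(a - a₀) * b| ≤ Ka * r * Bb := by
    rw [abs_mul]; exact mul_le_mul ha hb_bdd (abs_nonneg _) ((abs_nonneg _).trans ha)
  have h₂ : |a₀ * (b - b₀)| ≤ Ba * (Kb * r) := by
    rw [abs_mul]; exact mul_le_mul ha₀ hb (abs_nonneg _) ((abs_nonneg _).trans ha₀)
  calc |a * b - a₀ * b₀| = |(a - a₀) * b + a₀ * (b - b₀)| := by ring_nf
    _ ≤ |(a - a₀) * b| + |a₀ * (b - b₀)| := abs_add_le _ _
    _ ≤ (Ka * Bb + Ba * Kb) * r := by linarith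

theorem eventually_forall_nonneg_one_add_mul {α : Type*} {s : α → ℝ} {S : ℝ}
    (hs : ∀ x, |s x| ≤ S) :
    ∀ᶠ t in 𝓝 (0 : ℝ), ∀ x, 0 ≤ 1 + t * s x := by
  have hsmall : ∀ᶠ t in 𝓝 (0 : ℝ), |t| * S < 1 :=
    (continuous_abs.mul continuous_const).continuousAt.eventually_lt continuousAt_const
      (by simp)
  filter_upwards [hsmall] with t ht x
  have : |t * s x| ≤ |t| * S := by
    rw [abs_mul]; exact mul_le_mul_of_nonneg_left (hs x) (abs_nonneg t)
  linarith [neg_abs_le (t * s x)]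

section Tilt

variable {α : Type*} [MeasurableSpace α] {μ : Measure α}

theorem integral_withDensity_ofReal {E : Type*} [NormedAddCommGroup E] [NormedSpace ℝ E]
    {ρ : α → ℝ} (hρ : Measurable ρ) (hρ_nonneg : 0 ≤ᵐ[μ] ρ) (f : α → E) :
    ∫ x, f x ∂μ.withDensity (fun x ↦ ENNReal.ofReal (ρ x)) = ∫ x, ρ x • f x ∂μ := by
  rw [integral_withDensity_eq_integral_toReal_smul hρ.ennreal_ofReal
    (ae_of_all _ fun _ ↦ ENNReal.ofReal_lt_top)]
  refine integral_congr_ae ?_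
  filter_upwards [hρ_nonneg] with x hx
  rw [ENNReal.toReal_ofReal hx]

theorem integral_withDensity_one_add_mul {s g : α → ℝ} {t : ℝ} (hs : Measurable s)
    (ht : ∀ x, 0 ≤ 1 + t * s x) (hg : Integrable g μ)
    (hgs : Integrable (fun x ↦ g x * s x) μ) :
    ∫ x, g x ∂μ.withDensity (fun x ↦ ENNReal.ofReal (1 + t * s x))
      = ∫ x, g x ∂μ + t * ∫ x, g x * s x ∂μ := by
  rw [integral_withDensity_ofReal (ρ := fun x ↦ 1 + t * s x) (by fun_prop) (ae_of_all _ ht),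
    ← integral_const_mul, ← integral_add hg (hgs.const_mul t)]
  congr 1 with x
  simp only [smul_eq_mul]; ring

theorem hasDerivAt_integral_mul_tilt [IsFiniteMeasure μ] {f : ℝ → α → ℝ} {f' z s : α → ℝ}
    {c B K Mz S : ℝ} (hf_meas : ∀ t, AEStronglyMeasurable (f t) μ)
    (hf'_meas : AEStronglyMeasurable f' μ) (hz_meas : AEStronglyMeasurable z μ)
    (hs_meas : AEStronglyMeasurable s μ) (hf_bdd : ∀ᵐ a ∂μ, |f 0 a| ≤ B)
    (hf_lip : ∀ᵐ a ∂μ, ∀ t, |f t a - f 0 a| ≤ K * |t|) (hz_bdd : ∀ᵐ a ∂μ, |z a| ≤ Mz)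
    (hs_bdd : ∀ᵐ a ∂μ, |s a| ≤ S) (hf_diff : ∀ᵐ a ∂μ, HasDerivAt (f · a) (f' a) 0) :
    HasDerivAt (fun t ↦ ∫ a, f t a * ((z a - t * c) * (1 + t * s a)) ∂μ)
      (∫ a, f' a * z a + f 0 a * (z a * s a - c) ∂μ) 0 := by
  set w : ℝ → α → ℝ := fun t a ↦ (z a - t * c) * (1 + t * s a)
  have hw_meas : ∀ t, AEStronglyMeasurable (w t) μ := fun t ↦ by fun_prop
  have hw_zero : ∀ a, w 0 a = z a := fun a ↦ by simp [w]
  have hfactors : ∀ᵐ a ∂μ, ∀ t ∈ ball (0 : ℝ) 1,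
      |z a - t * c| ≤ Mz + |c| ∧ |1 + t * s a| ≤ 1 + S := by
    filter_upwards [hz_bdd, hs_bdd] with a hz hs t ht
    have ht : |t| ≤ 1 := (mem_ball_zero_iff.1 ht).le
    constructor
    · calc |z a - t * c| ≤ |z a| + |t| * |c| := by rw [← abs_mul]; exact abs_sub _ _
        _ ≤ Mz + 1 * |c| := by gcongr
        _ = Mz + |c| := by ring
    · calc |1 + t * s a| ≤ 1 + |t| * |s a| := by
            simpa only [abs_one, abs_mul] using abs_add_le 1 (t * s a)
        _ ≤ 1 + 1 * S := by gcongr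
        _ = 1 + S := by ring
  have hw_bdd : ∀ᵐ a ∂μ, ∀ t ∈ ball (0 : ℝ) 1, |w t a| ≤ (Mz + |c|) * (1 + S) := by
    filter_upwards [hfactors] with a ha t ht
    obtain ⟨h₁, h₂⟩ := ha t ht
    rw [abs_mul]; exact mul_le_mul h₁ h₂ (abs_nonneg _) ((abs_nonneg _).trans h₁)
  have hw_lip : ∀ᵐ a ∂μ, ∀ t ∈ ball (0 : ℝ) 1,
      |w t a - w 0 a| ≤ (|c| * (1 + S) + Mz * S) * |t| := by
    filter_upwards [hz_bdd, hs_bdd, hfactors] with a hz hs ha t ht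
    rw [hw_zero, ← mul_one (z a)]
    refine abs_mul_sub_mul_le ?_ ?_ hz (ha t ht).2
    · rw [sub_sub_cancel_left, abs_neg, abs_mul, mul_comm]
    · rw [add_sub_cancel_left, abs_mul, mul_comm]
      exact mul_le_mul_of_nonneg_right hs (abs_nonneg t)
  refine (hasDerivAt_integral_of_dominated_loc_of_lip' (F := fun t a ↦ f t a * w t a)
    (bound := fun _ ↦ K * ((Mz + |c|) * (1 + S)) + B * (|c| * (1 + S) + Mz * S))
    (ball_mem_nhds 0 one_pos) (fun t _ ↦ (hf_meas t).mul (hw_meas t)) ?_ (by fun_prop) ?_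
    (integrable_const _) ?_).2
  · have hz_int : Integrable z μ :=
      .of_bound hz_meas Mz (by simpa only [Real.norm_eq_abs] using hz_bdd)
    refine (hz_int.bdd_mul (c := B) (hf_meas 0)
      (by simpa only [Real.norm_eq_abs] using hf_bdd)).congr (ae_of_all _ fun a ↦ ?_)
    simp only [hw_zero]
  · filter_upwards [hf_bdd, hf_lip, hw_bdd, hw_lip] with a hf hf_lip hw hw_lip t ht
    rw [Real.norm_eq_abs, Real.norm_eq_abs, sub_zero]
    exact abs_mul_sub_mul_le (hf_lip t) (hw_lip t ht) hf (hw t ht)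
  · filter_upwards [hf_diff] with a ha
    have hw' : HasDerivAt (w · a) ((-c) * (1 + 0 * s a) + (z a - 0 * c) * s a) 0 :=
      ((hasDerivAt_id' 0).mul_const c |>.const_sub (z a)).mul
        ((hasDerivAt_id' 0).mul_const (s a) |>.const_add 1) |>.congr_deriv (by ring)
    exact (ha.mul hw').congr_deriv (by rw [hw_zero]; ring)

end Tilt

section CondExp

variable {α : Type*} {m mα : MeasurableSpace α} {μ : Measure α}

theorem integral_mul_condExp_of_stronglyMeasurable (hm : m ≤ mα) [SigmaFinite (μ.trim hm)]
    {f g : α → ℝ} (hf : StronglyMeasurable[m] f) (hfg : Integrable (f * g) μ)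
    (hg : Integrable g μ) :
    ∫ x, f x * μ[g | m] x ∂μ = ∫ x, f x * g x ∂μ := by
  calc ∫ x, f x * μ[g | m] x ∂μ = ∫ x, μ[f * g | m] x ∂μ :=
        integral_congr_ae (condExp_mul_of_stronglyMeasurable_left hf hfg hg).symm
    _ = ∫ x, f x * g x ∂μ := integral_condExp hm

theorem integral_mul_condExp_mul_sub_condExp [IsFiniteMeasure μ] (hm : m ≤ mα)
    {Z D X : α → ℝ} (hZm : StronglyMeasurable[m] Z) (hZ : MemLp Z ∞ μ) (hD : MemLp D ∞ μ)
    (hD_cond : μ[D | m] =ᵐ[μ] 0) (hX : Integrable X μ) :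
    ∫ x, Z x * μ[fun x ↦ D x * (X x - μ[X | m] x) | m] x ∂μ = ∫ x, Z x * D x * X x ∂μ := by
  set W : α → ℝ := Z * μ[X | m]
  have hWm : StronglyMeasurable[m] W := hZm.mul stronglyMeasurable_condExp
  have hW : Integrable W μ := integrable_condExp.mul_of_top_right hZ
  have hWD : Integrable (fun x ↦ W x * D x) μ := hW.mul_of_top_left hD
  have hWD_zero : ∫ x, W x * D x ∂μ = 0 := by
    rw [← integral_mul_condExp_of_stronglyMeasurable hm hWm hWD (hD.integrable le_top)]
    exact integral_eq_zero_of_ae (by filter_upwards [hD_cond] with x hx; simp [hx])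
  have hY : Integrable (fun x ↦ D x * (X x - μ[X | m] x)) μ :=
    (hX.sub integrable_condExp).mul_of_top_right hD
  rw [integral_mul_condExp_of_stronglyMeasurable hm hZm (hY.mul_of_top_right hZ) hY]
  have hZDX : Integrable (fun x ↦ Z x * D x * X x) μ := hX.mul_of_top_right (hD.mul' hZ)
  calc ∫ x, Z x * (D x * (X x - μ[X | m] x)) ∂μ
      = ∫ x, Z x * D x * X x - W x * D x ∂μ := by
        congr 1 with x; simp only [W, Pi.mul_apply]; ring
    _ = ∫ x, Z x * D x * X x ∂μ := by
        rw [integral_sub hZDX hWD, hWD_zero, sub_zero]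

theorem integral_deriv_eq_integral_influence_mul [IsFiniteMeasure μ] (hm : m ≤ mα)
    {φ ψ g D s : α → ℝ} (Ω₀ : ℝ) (hgm : StronglyMeasurable[m] g) (hg : MemLp g ∞ μ)
    (hψ : MemLp ψ ∞ μ) (hD : MemLp D ∞ μ) (hs : MemLp s ∞ μ)
    (hD_cond : μ[D | m] =ᵐ[μ] 0) (hs_mean : ∫ x, s x ∂μ = 0)
    (hφ : φ =ᵐ[μ] μ[fun x ↦ D x * (s x - μ[s | m] x) | m]) :
    ∫ x, φ x * (g x - ∫ y, g y ∂μ) + ψ x * ((g x - ∫ y, g y ∂μ) * s x - ∫ y, g y * s y ∂μ) ∂μ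
      = ∫ x, ((D x - ∫ y, ψ y ∂μ + ψ x) * (g x - ∫ y, g y ∂μ) - Ω₀) * s x ∂μ := by
  set Z : α → ℝ := fun x ↦ g x - ∫ y, g y ∂μ
  set c := ∫ y, g y * s y ∂μ
  have hZm : StronglyMeasurable[m] Z := hgm.sub stronglyMeasurable_const
  have hZ : MemLp Z ∞ μ := hg.sub (memLp_const _)
  have hs_int : Integrable s μ := hs.integrable le_top
  have hφ_int : Integrable φ μ := integrable_condExp.congr hφ.symm
  have hφZ : ∫ x, φ x * Z x ∂μ = ∫ x, Z x * D x * s x ∂μ := by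
    rw [← integral_mul_condExp_mul_sub_condExp hm hZm hZ hD hD_cond hs_int]
    refine integral_congr_ae ?_
    filter_upwards [hφ] with x hx
    rw [hx, mul_comm]
  have hgs : Integrable (fun x ↦ g x * s x) μ := hs_int.mul_of_top_right hg
  have hZs : ∫ x, Z x * s x ∂μ = c := by
    simp only [Z, sub_mul]
    rw [integral_sub hgs (hs_int.const_mul _), integral_const_mul, hs_mean, mul_zero, sub_zero]
  have hφZ_int : Integrable (fun x ↦ φ x * Z x) μ := hφ_int.mul_of_top_left hZ
  have hZs_int : Integrable (fun x ↦ Z x * s x) μ := hs_int.mul_of_top_right hZ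
  have hψZs : Integrable (fun x ↦ ψ x * (Z x * s x)) μ := hZs_int.mul_of_top_right hψ
  have hψc : Integrable (fun x ↦ ψ x * c) μ := (hψ.integrable le_top).mul_const c
  have hZDs : Integrable (fun x ↦ Z x * D x * s x) μ :=
    hs_int.mul_of_top_right (hD.mul' hZ (r := ∞))
  have hΩ₀s : Integrable (fun x ↦ Ω₀ * s x) μ := hs_int.const_mul Ω₀
  calc ∫ x, φ x * Z x + ψ x * (Z x * s x - c) ∂μ
      = ∫ x, φ x * Z x + (ψ x * (Z x * s x) - ψ x * c) ∂μ := by simp only [mul_sub]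
    _ = ∫ x, φ x * Z x ∂μ + (∫ x, ψ x * (Z x * s x) ∂μ - (∫ x, ψ x ∂μ) * c) := by
        rw [integral_add hφZ_int (hψZs.sub' hψc), integral_sub hψZs hψc, integral_mul_const]
    _ = ∫ x, (Z x * D x * s x + ψ x * (Z x * s x))
          - ((∫ y, ψ y ∂μ) * (Z x * s x) + Ω₀ * s x) ∂μ := by
        rw [integral_sub (hZDs.fun_add hψZs) ((hZs_int.const_mul _).fun_add hΩ₀s),
          integral_add hZDs hψZs, integral_add (hZs_int.const_mul _) hΩ₀s, integral_const_mul,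
          integral_const_mul, hZs, hs_mean, hφZ]
        ring
    _ = ∫ x, ((D x - ∫ y, ψ y ∂μ + ψ x) * Z x - Ω₀) * s x ∂μ := by
        congr 1 with x; ring

end CondExp

theorem stmt1_general
    {𝒰 𝒱 : Type*} [MeasurableSpace 𝒰] [MeasurableSpace 𝒱]
    (P₀ : Measure (𝒰 × 𝒱)) [IsProbabilityMeasure P₀]
    -- the direction `s`: bounded, measurable, mean zero
    (s : 𝒰 × 𝒱 → ℝ) (hs_meas : Measurable s) (S : ℝ) (hs_bdd : ∀ o, |s o| ≤ S)
    (hs_mean : ∫ o, s o ∂P₀ = 0)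
    -- the tilted path `P t`
    (P : ℝ → Measure (𝒰 × 𝒱))
    (hP : ∀ t, P t = P₀.withDensity (fun o => ENNReal.ofReal (1 + t * s o)))
    -- the function `h` in the dual class: bounded and measurable
    (h : 𝒱 → ℝ) (hh_meas : Measurable h) (Ch : ℝ) (hh_bdd : ∀ v, |h v| ≤ Ch)
    -- the function-valued parameter `Ψ (t, v) = Ψ_{t,v}`: measurable, bounded, Lipschitz in `t`
    (Ψ : ℝ × 𝒱 → ℝ) (hΨ_meas : Measurable Ψ)
    (B K : ℝ) (hΨ_bdd : ∀ t v, |Ψ (t, v)| ≤ B)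
    (hΨ_lip : ∀ t v, |Ψ (t, v) - Ψ (0, v)| ≤ K * |t|)
    -- the conditional influence function `D`: bounded, measurable, conditionally mean zero
    (D : 𝒰 × 𝒱 → ℝ) (hD_meas : Measurable D) (CD : ℝ) (hD_bdd : ∀ o, |D o| ≤ CD)
    (hD_cond : P₀[D | MeasurableSpace.comap (Prod.snd : 𝒰 × 𝒱 → 𝒱) inferInstance]
      =ᵐ[P₀] 0)
    -- `φ ∘ V` is a version of `E[D·(s − E[s|𝒢]) | 𝒢]`, and `t ↦ Ψ(t,v)` has derivative `φ v` at 0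
    (φ : 𝒱 → ℝ)
    (hφ_ver : (fun o => φ o.2)
      =ᵐ[P₀] P₀[fun o => D o *
          (s o - (P₀[s | MeasurableSpace.comap (Prod.snd : 𝒰 × 𝒱 → 𝒱) inferInstance]) o)
        | MeasurableSpace.comap (Prod.snd : 𝒰 × 𝒱 → 𝒱) inferInstance])
    (hφ_deriv : ∀ᵐ v ∂(P₀.map Prod.snd), HasDerivAt (fun t => Ψ (t, v)) (φ v) 0)
    -- the functional `Ω` along the path
    (Ω : ℝ → ℝ)
    (hΩ : ∀ t, Ω t = ∫ o, Ψ (t, o.2) * (h o.2 - ∫ o', h o'.2 ∂(P t)) ∂(P t))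
    -- the efficient influence function `D*`
    (Dstar : 𝒰 × 𝒱 → ℝ)
    (hDstar : ∀ o, Dstar o =
      (D o - (∫ o', Ψ (0, o'.2) ∂P₀) + Ψ (0, o.2)) * (h o.2 - ∫ o', h o'.2 ∂P₀) - Ω 0) :
    HasDerivAt Ω (∫ o, Dstar o * s o ∂P₀) 0 := by
  have memLp_of_abs_le : ∀ {f : 𝒰 × 𝒱 → ℝ} {C : ℝ}, Measurable f → (∀ o, |f o| ≤ C) →
      MemLp f ∞ P₀ := fun hf hC ↦
    memLp_top_of_bound hf.aestronglyMeasurable _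
      (ae_of_all _ fun o ↦ (Real.norm_eq_abs _).trans_le (hC o))
  have hs : MemLp s ∞ P₀ := memLp_of_abs_le hs_meas hs_bdd
  have hhV : MemLp (fun o ↦ h o.2) ∞ P₀ := memLp_of_abs_le (by fun_prop) fun o ↦ hh_bdd o.2
  set c := ∫ o, h o.2 * s o ∂P₀
  have hΩ_near : Ω =ᶠ[𝓝 0] fun t ↦
      ∫ o, Ψ (t, o.2) * ((h o.2 - ∫ o', h o'.2 ∂P₀ - t * c) * (1 + t * s o)) ∂P₀ := by
    filter_upwards [eventually_forall_nonneg_one_add_mul hs_bdd] with t ht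
    rw [hΩ, hP, integral_withDensity_one_add_mul hs_meas ht (hhV.integrable le_top)
      ((hs.integrable le_top).mul_of_top_right hhV),
      integral_withDensity_ofReal (ρ := fun o ↦ 1 + t * s o) (by fun_prop) (ae_of_all _ ht)]
    congr 1 with o
    simp only [smul_eq_mul]; ring
  have hderiv := hasDerivAt_integral_mul_tilt (μ := P₀) (f := fun t o ↦ Ψ (t, o.2))
    (f' := fun o ↦ φ o.2) (z := fun o ↦ h o.2 - ∫ o', h o'.2 ∂P₀) (c := c)
    (fun t ↦ (hΨ_meas.comp (measurable_const.prodMk measurable_snd)).aestronglyMeasurable)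
    (integrable_condExp.aestronglyMeasurable.congr hφ_ver.symm)
    (hhV.1.sub aestronglyMeasurable_const) hs_meas.aestronglyMeasurable
    (ae_of_all _ fun o ↦ hΨ_bdd 0 o.2) (ae_of_all _ fun o t ↦ hΨ_lip t o.2)
    (ae_of_all _ fun o ↦ (abs_sub _ _).trans (add_le_add_left (hh_bdd o.2) _))
    (ae_of_all _ hs_bdd) (ae_of_ae_map measurable_snd.aemeasurable hφ_deriv)
  refine (hderiv.congr_of_eventuallyEq hΩ_near).congr_deriv ?_
  simp only [hDstar]
  exact integral_deriv_eq_integral_influence_mul measurable_snd.comap_le (Ω 0)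
    ((hh_meas.comp (comap_measurable _)).stronglyMeasurable) hhV
    (memLp_of_abs_le (by fun_prop) fun o ↦ hΨ_bdd 0 o.2) (memLp_of_abs_le hD_meas hD_bdd) hs
    hD_cond hs_mean hφ_ver

/-- Pathwise differentiability of `Ω_{P_t}(h) = ∫ Ψ_{t}(V)·(h(V) − ∫ h(V) dP_t) dP_t`
along the tilted path `dP_t = (1 + t·s) dP₀`, with efficient influence function
`D*(o) = (D(o) − ∫Ψ(0,V)dP₀ + Ψ(0,V(o)))·(h(V(o)) − ∫h(V)dP₀) − Ω(0)`.
Here `𝒢` is the σ-algebra generated by the projection `V = Prod.snd`. -/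
theorem stmt1
    {𝒰 𝒱 : Type*} [MeasurableSpace 𝒰] [MeasurableSpace 𝒱]
    (P₀ : Measure (𝒰 × 𝒱)) [IsProbabilityMeasure P₀]
    -- the direction `s`: bounded, measurable, mean zero
    (s : 𝒰 × 𝒱 → ℝ) (hs_meas : Measurable s) (S : ℝ) (hs_bdd : ∀ o, |s o| ≤ S)
    (hs_mean : ∫ o, s o ∂P₀ = 0)
    -- the tilted path `P t`
    (P : ℝ → Measure (𝒰 × 𝒱))
    (hP : ∀ t, P t = P₀.withDensity (fun o => ENNReal.ofReal (1 + t * s o)))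
    -- the function `h` in the dual class: bounded and measurable
    (h : 𝒱 → ℝ) (hh_meas : Measurable h) (Ch : ℝ) (hh_bdd : ∀ v, |h v| ≤ Ch)
    -- the function-valued parameter `Ψ (t, v) = Ψ_{t,v}`: measurable, bounded, Lipschitz in `t`
    (Ψ : ℝ × 𝒱 → ℝ) (hΨ_meas : Measurable Ψ)
    (B K : ℝ) (hΨ_bdd : ∀ t v, |Ψ (t, v)| ≤ B)
    (hΨ_lip : ∀ t v, |Ψ (t, v) - Ψ (0, v)| ≤ K * |t|)
    -- the conditional influence function `D`: bounded, measurable, conditionally mean zero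
    (D : 𝒰 × 𝒱 → ℝ) (hD_meas : Measurable D) (CD : ℝ) (hD_bdd : ∀ o, |D o| ≤ CD)
    (hD_cond : P₀[D | MeasurableSpace.comap (Prod.snd : 𝒰 × 𝒱 → 𝒱) inferInstance]
      =ᵐ[P₀] 0)
    -- `φ ∘ V` is a version of `E[D·(s − E[s|𝒢]) | 𝒢]`, and `t ↦ Ψ(t,v)` has derivative `φ v` at 0
    (φ : 𝒱 → ℝ) (hφ_meas : Measurable φ)
    (hφ_ver : (fun o => φ o.2)
      =ᵐ[P₀] P₀[fun o => D o *
          (s o - (P₀[s | MeasurableSpace.comap (Prod.snd : 𝒰 × 𝒱 → 𝒱) inferInstance]) o)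
        | MeasurableSpace.comap (Prod.snd : 𝒰 × 𝒱 → 𝒱) inferInstance])
    (hφ_deriv : ∀ᵐ v ∂(P₀.map Prod.snd), HasDerivAt (fun t => Ψ (t, v)) (φ v) 0)
    -- the functional `Ω` along the path
    (Ω : ℝ → ℝ)
    (hΩ : ∀ t, Ω t = ∫ o, Ψ (t, o.2) * (h o.2 - ∫ o', h o'.2 ∂(P t)) ∂(P t))
    -- the efficient influence function `D*`
    (Dstar : 𝒰 × 𝒱 → ℝ)
    (hDstar : ∀ o, Dstar o =
      (D o - (∫ o', Ψ (0, o'.2) ∂P₀) + Ψ (0, o.2)) * (h o.2 - ∫ o', h o'.2 ∂P₀) - Ω 0) :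
    HasDerivAt Ω (∫ o, Dstar o * s o ∂P₀) 0 :=
  stmt1_general P₀ s hs_meas S hs_bdd hs_mean P hP h hh_meas Ch hh_bdd Ψ hΨ_meas B K hΨ_bdd hΨ_lip D
    hD_meas CD hD_bdd hD_cond φ hφ_ver hφ_deriv Ω hΩ Dstar hDstar
end

section
/- Let (Ω, ℱ, P) be a probability space carrying a bounded real random variable Y, a random variable T taking values in {0,1}, and a random variable X with values in a measurable space 𝒳. Let π : 𝒳 → ℝ be measurable with π(X) a version of E[T | σ(X)] and ε ≤ π(x) ≤ 1 − ε for some ε > 0 and all x, and let μ : {0,1} × 𝒳 → ℝ be bounded measurable with μ(T, X) a version of E[Y | σ(T, X)]. Define the AIPW pseudo-outcome ψ₀ := (2T − 1)/( T·π(X) + (1 − T)·(1 − π(X)) ) · ( Y − μ(T, X) ) + μ(1, X) − μ(0, X). Then E[ψ₀ | σ(X)] = μ(1, X) − μ(0, X) almost surely; in particular, E[ψ₀] = E[μ(1, X) − μ(0, X)]. -/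
open MeasureTheory

/-!
Write `ψ₀ = w(T,X)·(Y − μ(T,X)) + (μ(1,X) − μ(0,X))`. The weight `w` is bounded (by `1/ε`) and
`σ(T,X)`-measurable, so it pulls out of `E[· | σ(T,X)]`, which kills the residual
`Y − μ(T,X)`; the tower property passes this to `σ(X) ⊆ σ(T,X)`, and the second summand is
`σ(X)`-measurable.
-/

namespace MeasureTheory

variable {Ω E : Type*} {m m₀ : MeasurableSpace Ω} {μ : Measure Ω}
  [NormedAddCommGroup E] [NormedSpace ℝ E] [CompleteSpace E]

theorem condExp_sub_ae_eq_zero_of_ae_eq_condExp (hm : m ≤ m₀) [SigmaFinite (μ.trim hm)]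
    {f g : Ω → E} (hf : Integrable f μ) (hg : g =ᵐ[μ] μ[f | m]) : μ[f - g | m] =ᵐ[μ] 0 := by
  have hg_int : Integrable g μ := integrable_condExp.congr hg.symm
  have hg_meas : AEStronglyMeasurable[m] g μ :=
    stronglyMeasurable_condExp.aestronglyMeasurable.congr hg.symm
  filter_upwards [condExp_sub hf hg_int m, condExp_of_aestronglyMeasurable' hm hg_meas hg_int, hg]
    with ω h₁ h₂ h₃
  simp [h₁, h₂, h₃]

theorem condExp_mul_sub_ae_eq_zero (hm : m ≤ m₀) [SigmaFinite (μ.trim hm)]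
    {f g w : Ω → ℝ} (hf : Integrable f μ) (hg : g =ᵐ[μ] μ[f | m]) (hw : StronglyMeasurable[m] w)
    (hwfg : Integrable (w * (f - g)) μ) : μ[w * (f - g) | m] =ᵐ[μ] 0 := by
  have hg_int : Integrable g μ := integrable_condExp.congr hg.symm
  filter_upwards [condExp_mul_of_stronglyMeasurable_left hw hwfg (hf.sub hg_int),
    condExp_sub_ae_eq_zero_of_ae_eq_condExp hm hf hg] with ω h₁ h₂
  simp [h₁, h₂]

theorem condExp_ae_eq_zero_of_le {m₁ m₂ : MeasurableSpace Ω} (hm₁₂ : m₁ ≤ m₂) (hm₂ : m₂ ≤ m₀)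
    [SigmaFinite (μ.trim hm₂)] {f : Ω → E} (hf : μ[f | m₂] =ᵐ[μ] 0) : μ[f | m₁] =ᵐ[μ] 0 :=
  (condExp_condExp_of_le hm₁₂ hm₂).symm.trans ((condExp_congr_ae hf).trans (by rw [condExp_zero]))

theorem condExp_add_ae_eq_of_condExp_ae_eq_zero (hm : m ≤ m₀) [SigmaFinite (μ.trim hm)]
    {f h : Ω → E} (hf : Integrable f μ) (hf₀ : μ[f | m] =ᵐ[μ] 0) (hh : StronglyMeasurable[m] h)
    (hh_int : Integrable h μ) : μ[f + h | m] =ᵐ[μ] h := by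
  filter_upwards [condExp_add hf hh_int m, hf₀] with ω h₁ h₂
  simp [h₁, h₂, condExp_of_stronglyMeasurable hm hh hh_int]

theorem condExp_mul_sub_add_ae_eq {m₁ m₂ : MeasurableSpace Ω} (hm₁₂ : m₁ ≤ m₂) (hm₂ : m₂ ≤ m₀)
    [SigmaFinite (μ.trim hm₂)] [SigmaFinite (μ.trim (hm₁₂.trans hm₂))] {f g w h : Ω → ℝ}
    (hf : Integrable f μ) (hg : g =ᵐ[μ] μ[f | m₂]) (hw : StronglyMeasurable[m₂] w)
    (hwfg : Integrable (w * (f - g)) μ) (hh : StronglyMeasurable[m₁] h) (hh_int : Integrable h μ) :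
    μ[w * (f - g) + h | m₁] =ᵐ[μ] h :=
  condExp_add_ae_eq_of_condExp_ae_eq_zero (hm₁₂.trans hm₂) hwfg
    (condExp_ae_eq_zero_of_le hm₁₂ hm₂ (condExp_mul_sub_ae_eq_zero hm₂ hf hg hw hwfg)) hh hh_int

end MeasureTheory

section AIPW

variable {𝒳 : Type*}

/-- Equals `1/π(x)` at `t = 1` and `−1/(1 − π(x))` at `t = 0`. -/
noncomputable def aipwWeight (π : 𝒳 → ℝ) (q : ℝ × 𝒳) : ℝ :=
  (2 * q.1 - 1) / (q.1 * π q.2 + (1 - q.1) * (1 - π q.2))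

theorem measurable_aipwWeight [MeasurableSpace 𝒳] {π : 𝒳 → ℝ} (hπ : Measurable π) :
    Measurable (aipwWeight π) := by
  unfold aipwWeight
  fun_prop

theorem abs_aipwWeight_le {π : 𝒳 → ℝ} {ε : ℝ} {q : ℝ × 𝒳} (hε : 0 < ε) (hq : q.1 = 0 ∨ q.1 = 1)
    (hπ : ε ≤ π q.2 ∧ π q.2 ≤ 1 - ε) : |aipwWeight π q| ≤ ε⁻¹ := by
  obtain ⟨t, x⟩ := q
  unfold aipwWeight
  rcases hq with rfl | rfl
  · rw [show (2 * 0 - 1 : ℝ) / (0 * π x + (1 - 0) * (1 - π x)) = -(1 - π x)⁻¹ by ring, abs_neg,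
      abs_inv, abs_of_pos (by linarith)]
    exact inv_anti₀ hε (by linarith)
  · rw [show (2 * 1 - 1 : ℝ) / (1 * π x + (1 - 1) * (1 - π x)) = (π x)⁻¹ by ring, abs_inv,
      abs_of_pos (by linarith)]
    exact inv_anti₀ hε hπ.1

end AIPW

theorem stmt8_general {Ω 𝒳 : Type*} {ℱ : MeasurableSpace Ω} [MeasurableSpace 𝒳]
    (P : Measure Ω) [IsProbabilityMeasure P]
    (Y : Ω → ℝ) (hY_meas : Measurable Y) (CY : ℝ) (hY_bdd : ∀ ω, |Y ω| ≤ CY)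
    (T : Ω → ℝ) (hT_meas : Measurable T) (hT_bin : ∀ ω, T ω = 0 ∨ T ω = 1)
    (X : Ω → 𝒳) (hX_meas : Measurable X)
    (π : 𝒳 → ℝ) (hπ_meas : Measurable π)
    (ε : ℝ) (hε : 0 < ε) (hπ_bdd : ∀ x, ε ≤ π x ∧ π x ≤ 1 - ε)
    (μ : ℝ × 𝒳 → ℝ) (hμ_meas : Measurable μ) (Cμ : ℝ) (hμ_bdd : ∀ w, |μ w| ≤ Cμ)
    (hμ_ver : (fun ω => μ (T ω, X ω))
      =ᵐ[P] P[Y | MeasurableSpace.comap (fun ω => (T ω, X ω)) inferInstance])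
    (ψ₀ : Ω → ℝ)
    (hψ₀ : ∀ ω, ψ₀ ω =
      (2 * T ω - 1) / (T ω * π (X ω) + (1 - T ω) * (1 - π (X ω))) * (Y ω - μ (T ω, X ω))
        + μ (1, X ω) - μ (0, X ω)) :
    (P[ψ₀ | MeasurableSpace.comap X inferInstance]
      =ᵐ[P] fun ω => μ (1, X ω) - μ (0, X ω))
    ∧ ∫ ω, ψ₀ ω ∂P = ∫ ω, (μ (1, X ω) - μ (0, X ω)) ∂P := by
  have hTX : Measurable fun ω => (T ω, X ω) := hT_meas.prodMk hX_meas
  set mX : MeasurableSpace Ω := MeasurableSpace.comap X inferInstance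
  set mTX : MeasurableSpace Ω := MeasurableSpace.comap (fun ω => (T ω, X ω)) inferInstance
  have hmX_TX : mX ≤ mTX := (measurable_snd.comp (comap_measurable fun ω => (T ω, X ω))).comap_le
  set w : Ω → ℝ := fun ω => aipwWeight π (T ω, X ω)
  set h : Ω → ℝ := fun ω => μ (1, X ω) - μ (0, X ω)
  have hw_meas : StronglyMeasurable[mTX] w :=
    ((measurable_aipwWeight hπ_meas).comp (comap_measurable _)).stronglyMeasurable
  have hh_meas : StronglyMeasurable[mX] h :=
    ((by fun_prop : Measurable fun x => μ (1, x) - μ (0, x)).comp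
      (comap_measurable _)).stronglyMeasurable
  have hY_int : Integrable Y P := .of_bound hY_meas.aestronglyMeasurable CY (ae_of_all _ hY_bdd)
  have hwr_int : Integrable (w * (Y - fun ω => μ (T ω, X ω))) P :=
    (hY_int.sub (.of_bound (hμ_meas.comp hTX).aestronglyMeasurable Cμ
      (ae_of_all _ fun ω => hμ_bdd _))).bdd_mul (hw_meas.mono hTX.comap_le).aestronglyMeasurable
      (ae_of_all _ fun ω => abs_aipwWeight_le hε (hT_bin ω) (hπ_bdd (X ω)))
  have hh_int : Integrable h P := .of_bound (hh_meas.mono hX_meas.comap_le).aestronglyMeasurable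
    (Cμ + Cμ) (ae_of_all _ fun ω => (abs_sub _ _).trans (add_le_add (hμ_bdd _) (hμ_bdd _)))
  have hψ₀_eq : ψ₀ = w * (Y - fun ω => μ (T ω, X ω)) + h := by
    funext ω
    simp only [hψ₀, Pi.add_apply, Pi.mul_apply, Pi.sub_apply, w, h, aipwWeight]
    ring
  have hcond : P[ψ₀ | mX] =ᵐ[P] h := hψ₀_eq ▸
    condExp_mul_sub_add_ae_eq hmX_TX hTX.comap_le hY_int hμ_ver hw_meas hwr_int hh_meas hh_int
  refine ⟨hcond, ?_⟩
  rw [← integral_condExp hX_meas.comap_le]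
  exact integral_congr_ae hcond

/-- Conditional unbiasedness of the AIPW pseudo-outcome: with `π(X)` a version of
`E[T | σ(X)]` bounded in `[ε, 1−ε]` and `μ(T,X)` a version of `E[Y | σ(T,X)]`, the
pseudo-outcome `ψ₀ = (2T−1)/(Tπ(X) + (1−T)(1−π(X)))·(Y − μ(T,X)) + μ(1,X) − μ(0,X)`
satisfies `E[ψ₀ | σ(X)] = μ(1,X) − μ(0,X)` a.s.; in particular its mean is the ATE. -/
theorem stmt8 {Ω 𝒳 : Type*} {ℱ : MeasurableSpace Ω} [MeasurableSpace 𝒳]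
    (P : Measure Ω) [IsProbabilityMeasure P]
    (Y : Ω → ℝ) (hY_meas : Measurable Y) (CY : ℝ) (hY_bdd : ∀ ω, |Y ω| ≤ CY)
    (T : Ω → ℝ) (hT_meas : Measurable T) (hT_bin : ∀ ω, T ω = 0 ∨ T ω = 1)
    (X : Ω → 𝒳) (hX_meas : Measurable X)
    (π : 𝒳 → ℝ) (hπ_meas : Measurable π)
    (ε : ℝ) (hε : 0 < ε) (hπ_bdd : ∀ x, ε ≤ π x ∧ π x ≤ 1 - ε)
    (hπ_ver : (fun ω => π (X ω)) =ᵐ[P] P[T | MeasurableSpace.comap X inferInstance])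
    (μ : ℝ × 𝒳 → ℝ) (hμ_meas : Measurable μ) (Cμ : ℝ) (hμ_bdd : ∀ w, |μ w| ≤ Cμ)
    (hμ_ver : (fun ω => μ (T ω, X ω))
      =ᵐ[P] P[Y | MeasurableSpace.comap (fun ω => (T ω, X ω)) inferInstance])
    (ψ₀ : Ω → ℝ)
    (hψ₀ : ∀ ω, ψ₀ ω =
      (2 * T ω - 1) / (T ω * π (X ω) + (1 - T ω) * (1 - π (X ω))) * (Y ω - μ (T ω, X ω))
        + μ (1, X ω) - μ (0, X ω)) :
    (P[ψ₀ | MeasurableSpace.comap X inferInstance]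
      =ᵐ[P] fun ω => μ (1, X ω) - μ (0, X ω))
    ∧ ∫ ω, ψ₀ ω ∂P = ∫ ω, (μ (1, X ω) - μ (0, X ω)) ∂P :=
  stmt8_general (ℱ := ℱ) P Y hY_meas CY hY_bdd T hT_meas hT_bin X hX_meas π hπ_meas ε hε hπ_bdd μ
    hμ_meas Cμ hμ_bdd hμ_ver ψ₀ hψ₀
end

section
/- Let (Ω, ℱ, P) be a probability space carrying bounded real random variables X and Y and a random variable Z with values in a measurable space 𝒵. Let μ₀y, μ₀x : 𝒵 → ℝ be bounded measurable with μ₀y(Z) a version of E[Y | σ(Z)] and μ₀x(Z) a version of E[X | σ(Z)]. Let μny, μnx : 𝒵 → ℝ be bounded measurable, let h : 𝒵 → ℝ be bounded measurable with h̄₀ := E[h(Z)], and let h̄_n, c_n ∈ ℝ. Then E[ ( (Y − μny(Z))·(X − μnx(Z)) − c_n )·( h(Z) − h̄_n ) ] − E[ (Y − μ₀y(Z))·(X − μ₀x(Z))·( h(Z) − h̄₀ ) ] = E[ (μny(Z) − μ₀y(Z))·(μnx(Z) − μ₀x(Z))·( h(Z) − h̄₀ ) ] + (h̄₀ − h̄_n)·E[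 (μny(Z) − μ₀y(Z))·(μnx(Z) − μ₀x(Z)) ] + (h̄₀ − h̄_n)·( E[ (Y − μ₀y(Z))·(X − μ₀x(Z)) ] − c_n ). -/
/-!
Write `Y - μny(Z) = (Y - μ₀y(Z)) - (μny - μ₀y)(Z)` and likewise for `X`. After expanding the
product, each cross term is a residual `Y - E[Y | σ(Z)]` (or `X - E[X | σ(Z)]`) times a bounded
`σ(Z)`-measurable function, so it integrates to zero by the pull-out property of conditional
expectation. Recentering `h(Z) - h̄ₙ` at `h̄₀` then yields the three terms of the identity.
-/

open MeasureTheory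
open scoped ENNReal

section

variable {Ω : Type*} {m m₀ : MeasurableSpace Ω} {P : Measure Ω}

theorem memLp_top_of_ae_eq_condExp {Y f : Ω → ℝ} (hY : MemLp Y ∞ P) (hf : f =ᵐ[P] P[Y | m]) :
    MemLp f ∞ P :=
  (hY.condExp le_top).ae_eq hf.symm

theorem aestronglyMeasurable_of_ae_eq_condExp {Y f : Ω → ℝ} (hf : f =ᵐ[P] P[Y | m]) :
    AEStronglyMeasurable[m] f P :=
  stronglyMeasurable_condExp.aestronglyMeasurable.congr hf.symm

theorem integral_sub_mul_eq_zero_of_ae_eq_condExp [IsFiniteMeasure P] (hm : m ≤ m₀)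
    {Y f g : Ω → ℝ} (hY : Integrable Y P) (hf : f =ᵐ[P] P[Y | m])
    (hg : MemLp g ∞ P) (hgm : AEStronglyMeasurable[m] g P) :
    ∫ ω, (Y ω - f ω) * g ω ∂P = 0 := by
  have hf_int : Integrable f P := integrable_condExp.congr hf.symm
  have hgY : Integrable (g * Y) P := hY.mul_of_top_right hg
  have hgf : Integrable (g * f) P := hf_int.mul_of_top_right hg
  have hpull : ∫ ω, (g * Y) ω ∂P = ∫ ω, (g * f) ω ∂P := calc
    ∫ ω, (g * Y) ω ∂P = ∫ ω, (P[g * Y | m]) ω ∂P := (integral_condExp hm).symm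
    _ = ∫ ω, (g * f) ω ∂P := integral_congr_ae <|
      (condExp_mul_of_aestronglyMeasurable_left hgm hgY hY).trans (hf.symm.mul_left (f₃ := g))
  calc ∫ ω, (Y ω - f ω) * g ω ∂P = ∫ ω, ((g * Y) ω - (g * f) ω) ∂P := by
        congr 1 with ω; simp only [Pi.mul_apply]; ring
    _ = 0 := by rw [integral_sub hgY hgf, hpull, sub_self]

theorem integral_mul_sub_eq_add_mul_integral {F k : Ω → ℝ} (K t : ℝ)
    (hFk : Integrable (fun ω => F ω * (k ω - K)) P) (hF : Integrable F P) :
    ∫ ω, F ω * (k ω - t) ∂P = ∫ ω, F ω * (k ω - K) ∂P + (K - t) * ∫ ω, F ω ∂P := by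
  rw [← integral_const_mul, ← integral_add hFk (hF.const_mul _)]
  congr 1 with ω; ring

theorem integral_sub_mul_sub_sub_mul_eq [IsProbabilityMeasure P] (hm : m ≤ m₀)
    {Y X fY fX u v k : Ω → ℝ} (hY : MemLp Y ∞ P) (hX : MemLp X ∞ P)
    (hfY : fY =ᵐ[P] P[Y | m]) (hfX : fX =ᵐ[P] P[X | m])
    (hu : MemLp u ∞ P) (hv : MemLp v ∞ P) (hk : MemLp k ∞ P)
    (hum : AEStronglyMeasurable[m] u P) (hvm : AEStronglyMeasurable[m] v P)
    (hkm : AEStronglyMeasurable[m] k P) (t c : ℝ) :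
    ∫ ω, ((Y ω - u ω) * (X ω - v ω) - c) * (k ω - t) ∂P
      = ∫ ω, (Y ω - fY ω) * (X ω - fX ω) * (k ω - t) ∂P
        + ∫ ω, (u ω - fY ω) * (v ω - fX ω) * (k ω - t) ∂P - c * ((∫ ω, k ω ∂P) - t) := by
  set a := fun ω => Y ω - fY ω
  set b := fun ω => X ω - fX ω
  set du := fun ω => u ω - fY ω
  set dv := fun ω => v ω - fX ω
  have ha : MemLp a ∞ P := hY.sub (memLp_top_of_ae_eq_condExp hY hfY)
  have hb : MemLp b ∞ P := hX.sub (memLp_top_of_ae_eq_condExp hX hfX)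
  have hdu : MemLp du ∞ P := hu.sub (memLp_top_of_ae_eq_condExp hY hfY)
  have hdv : MemLp dv ∞ P := hv.sub (memLp_top_of_ae_eq_condExp hX hfX)
  have hkt : MemLp (fun ω => k ω - t) ∞ P := hk.sub (memLp_const t)
  have hdukt : MemLp (fun ω => du ω * (k ω - t)) ∞ P := hkt.mul' hdu
  have hdvkt : MemLp (fun ω => dv ω * (k ω - t)) ∞ P := hkt.mul' hdv
  have I1 : Integrable (fun ω => a ω * b ω * (k ω - t)) P :=
    (hkt.mul' (hb.mul' ha (r := ∞)) (r := ∞)).integrable le_top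
  have I2 : Integrable (fun ω => du ω * dv ω * (k ω - t)) P :=
    (hkt.mul' (hdv.mul' hdu (r := ∞)) (r := ∞)).integrable le_top
  have I3 : Integrable (fun ω => c * (k ω - t)) P := (hkt.integrable le_top).const_mul c
  have I4 : Integrable (fun ω => a ω * (dv ω * (k ω - t))) P :=
    (hdvkt.mul' ha (r := ∞)).integrable le_top
  have I5 : Integrable (fun ω => b ω * (du ω * (k ω - t))) P :=
    (hdukt.mul' hb (r := ∞)).integrable le_top
  have orth_a : ∫ ω, a ω * (dv ω * (k ω - t)) ∂P = 0 :=
    integral_sub_mul_eq_zero_of_ae_eq_condExp hm (hY.integrable le_top) hfY hdvkt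
      ((hvm.sub (aestronglyMeasurable_of_ae_eq_condExp hfX)).mul
        (hkm.sub aestronglyMeasurable_const))
  have orth_b : ∫ ω, b ω * (du ω * (k ω - t)) ∂P = 0 :=
    integral_sub_mul_eq_zero_of_ae_eq_condExp hm (hX.integrable le_top) hfX hdukt
      ((hum.sub (aestronglyMeasurable_of_ae_eq_condExp hfY)).mul
        (hkm.sub aestronglyMeasurable_const))
  have hc : ∫ ω, c * (k ω - t) ∂P = c * ((∫ ω, k ω ∂P) - t) := by
    rw [integral_const_mul, integral_sub (hk.integrable le_top) (integrable_const t)]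
    simp
  have expand : ∫ ω, ((Y ω - u ω) * (X ω - v ω) - c) * (k ω - t) ∂P
      = ∫ ω, a ω * b ω * (k ω - t) ∂P + ∫ ω, du ω * dv ω * (k ω - t) ∂P
        - ∫ ω, c * (k ω - t) ∂P - ∫ ω, a ω * (dv ω * (k ω - t)) ∂P
        - ∫ ω, b ω * (du ω * (k ω - t)) ∂P := by
    rw [← integral_add I1 I2, ← integral_sub (by fun_prop) I3, ← integral_sub (by fun_prop) I4,
      ← integral_sub (by fun_prop) I5]
    congr 1 with ω
    simp only [a, b, du, dv]
    ring
  rw [expand, orth_a, orth_b, hc, sub_zero, sub_zero]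

theorem condCov_remainder_eq [IsProbabilityMeasure P] (hm : m ≤ m₀)
    {Y X fY fX u v k : Ω → ℝ} (hY : MemLp Y ∞ P) (hX : MemLp X ∞ P)
    (hfY : fY =ᵐ[P] P[Y | m]) (hfX : fX =ᵐ[P] P[X | m])
    (hu : MemLp u ∞ P) (hv : MemLp v ∞ P) (hk : MemLp k ∞ P)
    (hum : AEStronglyMeasurable[m] u P) (hvm : AEStronglyMeasurable[m] v P)
    (hkm : AEStronglyMeasurable[m] k P) (t c : ℝ) :
    (∫ ω, ((Y ω - u ω) * (X ω - v ω) - c) * (k ω - t) ∂P)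
      - ∫ ω, (Y ω - fY ω) * (X ω - fX ω) * (k ω - ∫ ω', k ω' ∂P) ∂P
      = (∫ ω, (u ω - fY ω) * (v ω - fX ω) * (k ω - ∫ ω', k ω' ∂P) ∂P)
        + ((∫ ω', k ω' ∂P) - t) * ∫ ω, (u ω - fY ω) * (v ω - fX ω) ∂P
        + ((∫ ω', k ω' ∂P) - t) * ((∫ ω, (Y ω - fY ω) * (X ω - fX ω) ∂P) - c) := by
  have hfY_top := memLp_top_of_ae_eq_condExp hY hfY
  have hfX_top := memLp_top_of_ae_eq_condExp hX hfX
  have hkK : MemLp (fun ω => k ω - ∫ ω', k ω' ∂P) ∞ P := hk.sub (memLp_const _)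
  have hab : MemLp (fun ω => (Y ω - fY ω) * (X ω - fX ω)) ∞ P :=
    (hX.sub hfX_top).mul' (hY.sub hfY_top)
  have hdudv : MemLp (fun ω => (u ω - fY ω) * (v ω - fX ω)) ∞ P :=
    (hv.sub hfX_top).mul' (hu.sub hfY_top)
  rw [integral_sub_mul_sub_sub_mul_eq hm hY hX hfY hfX hu hv hk hum hvm hkm,
    integral_mul_sub_eq_add_mul_integral _ t
      ((hkK.mul' hab (r := ∞)).integrable le_top) (hab.integrable le_top),
    integral_mul_sub_eq_add_mul_integral _ t
      ((hkK.mul' hdudv (r := ∞)).integrable le_top) (hdudv.integrable le_top)]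
  ring

end

theorem stmt10_general {Ω 𝒵 : Type*} {ℱ : MeasurableSpace Ω} [MeasurableSpace 𝒵]
    (P : Measure Ω) [IsProbabilityMeasure P]
    (X Y : Ω → ℝ) (hX_meas : Measurable X) (hY_meas : Measurable Y)
    (CX CY : ℝ) (hX_bdd : ∀ ω, |X ω| ≤ CX) (hY_bdd : ∀ ω, |Y ω| ≤ CY)
    (Z : Ω → 𝒵) (hZ_meas : Measurable Z)
    (μ₀y μ₀x : 𝒵 → ℝ)
    (hμ₀y_ver : (fun ω => μ₀y (Z ω)) =ᵐ[P] P[Y | MeasurableSpace.comap Z inferInstance])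
    (hμ₀x_ver : (fun ω => μ₀x (Z ω)) =ᵐ[P] P[X | MeasurableSpace.comap Z inferInstance])
    (μny μnx : 𝒵 → ℝ) (hμny_meas : Measurable μny) (hμnx_meas : Measurable μnx)
    (Cny Cnx : ℝ) (hμny_bdd : ∀ z, |μny z| ≤ Cny) (hμnx_bdd : ∀ z, |μnx z| ≤ Cnx)
    (h : 𝒵 → ℝ) (hh_meas : Measurable h) (Ch : ℝ) (hh_bdd : ∀ z, |h z| ≤ Ch)
    (hbarn cn : ℝ) :
    (∫ ω, ((Y ω - μny (Z ω)) * (X ω - μnx (Z ω)) - cn) * (h (Z ω) - hbarn) ∂P)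
      - ∫ ω, (Y ω - μ₀y (Z ω)) * (X ω - μ₀x (Z ω)) * (h (Z ω) - ∫ ω', h (Z ω') ∂P) ∂P
      = (∫ ω, (μny (Z ω) - μ₀y (Z ω)) * (μnx (Z ω) - μ₀x (Z ω))
            * (h (Z ω) - ∫ ω', h (Z ω') ∂P) ∂P)
        + ((∫ ω', h (Z ω') ∂P) - hbarn)
            * ∫ ω, (μny (Z ω) - μ₀y (Z ω)) * (μnx (Z ω) - μ₀x (Z ω)) ∂P
        + ((∫ ω', h (Z ω') ∂P) - hbarn)
            * ((∫ ω, (Y ω - μ₀y (Z ω)) * (X ω - μ₀x (Z ω)) ∂P) - cn) := by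
  have hZ : Measurable[MeasurableSpace.comap Z inferInstance] Z := comap_measurable Z
  have memLp_comp {g : 𝒵 → ℝ} (hg : Measurable g) {C : ℝ} (hC : ∀ z, |g z| ≤ C) :
      MemLp (fun ω => g (Z ω)) ∞ P :=
    memLp_top_of_bound (hg.comp hZ_meas).aestronglyMeasurable C (.of_forall fun ω => hC (Z ω))
  exact condCov_remainder_eq hZ_meas.comap_le
    (memLp_top_of_bound hY_meas.aestronglyMeasurable CY (.of_forall hY_bdd))
    (memLp_top_of_bound hX_meas.aestronglyMeasurable CX (.of_forall hX_bdd))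
    hμ₀y_ver hμ₀x_ver (memLp_comp hμny_meas hμny_bdd) (memLp_comp hμnx_meas hμnx_bdd)
    (memLp_comp hh_meas hh_bdd) (hμny_meas.comp hZ).aestronglyMeasurable
    (hμnx_meas.comp hZ).aestronglyMeasurable (hh_meas.comp hZ).aestronglyMeasurable hbarn cn

/-- Exact second-order remainder identity for the conditional covariance functional
(Example 3): the remainder of the one-step estimator decomposes into a product of the two
conditional-mean estimation errors integrated against the centered `h`, plus products of
estimation errors. -/
theorem stmt10 {Ω 𝒵 : Type*} {ℱ : MeasurableSpace Ω} [MeasurableSpace 𝒵]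
    (P : Measure Ω) [IsProbabilityMeasure P]
    (X Y : Ω → ℝ) (hX_meas : Measurable X) (hY_meas : Measurable Y)
    (CX CY : ℝ) (hX_bdd : ∀ ω, |X ω| ≤ CX) (hY_bdd : ∀ ω, |Y ω| ≤ CY)
    (Z : Ω → 𝒵) (hZ_meas : Measurable Z)
    (μ₀y μ₀x : 𝒵 → ℝ) (hμ₀y_meas : Measurable μ₀y) (hμ₀x_meas : Measurable μ₀x)
    (C₀y C₀x : ℝ) (hμ₀y_bdd : ∀ z, |μ₀y z| ≤ C₀y) (hμ₀x_bdd : ∀ z, |μ₀x z| ≤ C₀x)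
    (hμ₀y_ver : (fun ω => μ₀y (Z ω)) =ᵐ[P] P[Y | MeasurableSpace.comap Z inferInstance])
    (hμ₀x_ver : (fun ω => μ₀x (Z ω)) =ᵐ[P] P[X | MeasurableSpace.comap Z inferInstance])
    (μny μnx : 𝒵 → ℝ) (hμny_meas : Measurable μny) (hμnx_meas : Measurable μnx)
    (Cny Cnx : ℝ) (hμny_bdd : ∀ z, |μny z| ≤ Cny) (hμnx_bdd : ∀ z, |μnx z| ≤ Cnx)
    (h : 𝒵 → ℝ) (hh_meas : Measurable h) (Ch : ℝ) (hh_bdd : ∀ z, |h z| ≤ Ch)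
    (hbarn cn : ℝ) :
    (∫ ω, ((Y ω - μny (Z ω)) * (X ω - μnx (Z ω)) - cn) * (h (Z ω) - hbarn) ∂P)
      - ∫ ω, (Y ω - μ₀y (Z ω)) * (X ω - μ₀x (Z ω)) * (h (Z ω) - ∫ ω', h (Z ω') ∂P) ∂P
      = (∫ ω, (μny (Z ω) - μ₀y (Z ω)) * (μnx (Z ω) - μ₀x (Z ω))
            * (h (Z ω) - ∫ ω', h (Z ω') ∂P) ∂P)
        + ((∫ ω', h (Z ω') ∂P) - hbarn)
            * ∫ ω, (μny (Z ω) - μ₀y (Z ω)) * (μnx (Z ω) - μ₀x (Z ω)) ∂P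
        + ((∫ ω', h (Z ω') ∂P) - hbarn)
            * ((∫ ω, (Y ω - μ₀y (Z ω)) * (X ω - μ₀x (Z ω)) ∂P) - cn) :=
  stmt10_general (ℱ := ℱ) P X Y hX_meas hY_meas CX CY hX_bdd hY_bdd Z hZ_meas μ₀y μ₀x hμ₀y_ver
    hμ₀x_ver μny μnx hμny_meas hμnx_meas Cny Cnx hμny_bdd hμnx_bdd h hh_meas Ch hh_bdd hbarn cn
end
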